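/- For every a > 0 and m > 0, the unique positive solution ν(m,a) of m = κ·tanh(κa/2) satisfies ν(m,a) ≤ ξ(m,a), where ξ(m,a) = √(8m/a) if m ≤ 1/(2a) and ξ(m,a) = 4m if m ≥ 1/(2a). -/

import Mathlib

noncomputable def xi (m a : ℝ) : ℝ := if m ≤ 1 / (2 * a) then Real.sqrt (8 * m / a) else 4 * m

/-!
The map `κ ↦ κ * tanh (κ * a / 2)` is strictly increasing on `[0, ∞)` and takes the value `m`
at `ν`, so it suffices to show that it is at least `m` at `ξ = xi m a`. Both cases follow from
`x / 2 ≤ tanh x` on `[0, 1]`: if `2 m a ≤ 1` then `ξ a / 2 = √(2 m a) ≤ 1` and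
`ξ tanh (ξ a / 2) ≥ ξ² a / 4 = 2 m`; otherwise `ξ a / 2 = 2 m a > 1` and
`ξ tanh (ξ a / 2) ≥ 4 m tanh 1 ≥ 2 m`.
-/

open Real Set

namespace Real

theorem tanh_strictMono : StrictMono tanh := fun x y hxy => by
  have hmem : ∀ z, tanh z ∈ Ioo (-1 : ℝ) 1 := fun z => ⟨neg_one_lt_tanh z, tanh_lt_one z⟩
  rwa [← strictMonoOn_artanh.lt_iff_lt (hmem x) (hmem y), artanh_tanh, artanh_tanh]

theorem tanh_pos {x : ℝ} (hx : 0 < x) : 0 < tanh x := by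
  simpa using tanh_strictMono hx

theorem tanh_nonneg {x : ℝ} (hx : 0 ≤ x) : 0 ≤ tanh x := by
  simpa using tanh_strictMono.monotone hx

theorem cosh_one_lt_two : cosh 1 < 2 := by
  have he : exp 1 < 2.7182818286 := exp_one_lt_d9
  have he' : exp (-1) ≤ 1 := exp_le_one_iff.mpr (by norm_num)
  rw [cosh_eq]
  linarith

theorem half_le_tanh {x : ℝ} (h0 : 0 ≤ x) (h1 : x ≤ 1) : x / 2 ≤ tanh x := by
  have hsinh : x ≤ sinh x := self_le_sinh_iff.mpr h0
  have hcosh : cosh x < 2 :=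
    (cosh_le_cosh.mpr (by rwa [abs_of_nonneg h0, abs_one])).trans_lt cosh_one_lt_two
  rw [tanh_eq_sinh_div_cosh, le_div_iff₀ (cosh_pos x)]
  nlinarith

theorem strictMonoOn_mul_tanh_mul {c : ℝ} (hc : 0 < c) :
    StrictMonoOn (fun x => x * tanh (x * c)) (Ici 0) := by
  intro x hx y hy hxy
  calc x * tanh (x * c) ≤ x * tanh (y * c) :=
        mul_le_mul_of_nonneg_left
          (tanh_strictMono.monotone (mul_le_mul_of_nonneg_right hxy.le hc.le)) hx
    _ < y * tanh (y * c) :=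
        mul_lt_mul_of_pos_right hxy (tanh_pos (mul_pos ((mem_Ici.mp hx).trans_lt hxy) hc))

end Real

theorem xi_nonneg (m : ℝ) {a : ℝ} (ha : 0 < a) : 0 ≤ xi m a := by
  unfold xi
  split_ifs
  · exact sqrt_nonneg _
  · have : 0 < 1 / (2 * a) := by positivity
    linarith

theorem le_xi_mul_tanh (m : ℝ) {a : ℝ} (ha : 0 < a) : m ≤ xi m a * tanh (xi m a * (a / 2)) := by
  rcases le_or_gt m 0 with hm | hm
  · have hξ := xi_nonneg m ha
    exact hm.trans (mul_nonneg hξ (tanh_nonneg (mul_nonneg hξ (half_pos ha).le)))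
  unfold xi
  split_ifs with hcase
  · have hma : 2 * m * a ≤ 1 := by
      rw [le_div_iff₀ (by positivity)] at hcase
      linarith
    set s := √(8 * m / a)
    have hs0 : 0 ≤ s := sqrt_nonneg _
    have hs : s ^ 2 * a = 8 * m := by
      rw [sq_sqrt (by positivity)]
      field_simp
    have hx1 : s * (a / 2) ≤ 1 := by nlinarith [sq_nonneg (s * (a / 2) - 1)]
    calc m ≤ s * (s * (a / 2) / 2) := by nlinarith
      _ ≤ s * tanh (s * (a / 2)) :=
        mul_le_mul_of_nonneg_left (half_le_tanh (by positivity) hx1) hs0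
  · have hx1 : 1 ≤ 4 * m * (a / 2) := by
      rw [not_le, div_lt_iff₀ (by positivity)] at hcase
      linarith
    calc m ≤ 4 * m * (1 / 2) := by linarith
      _ ≤ 4 * m * tanh (4 * m * (a / 2)) :=
        mul_le_mul_of_nonneg_left
          ((half_le_tanh zero_le_one le_rfl).trans (tanh_strictMono.monotone hx1)) (by positivity)

theorem stmt8_general (a m ν : ℝ) (ha : 0 < a)
    (hsol : ν * Real.tanh (ν * a / 2) = m) : ν ≤ xi m a := by
  by_contra! hlt
  have hξ := xi_nonneg m ha
  have hmono := strictMonoOn_mul_tanh_mul (half_pos ha) hξ (hξ.trans hlt.le) hlt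
  rw [mul_div_assoc] at hsol
  linarith [le_xi_mul_tanh m ha]

theorem stmt8 (a m ν : ℝ) (ha : 0 < a) (hm : 0 < m) (hν : 0 < ν)
    (hsol : ν * Real.tanh (ν * a / 2) = m) : ν ≤ xi m a :=
  stmt8_general a m ν ha hsol
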